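/- Let k be a field of characteristic zero, V a k-vector space, and μ : V×V → V a bilinear map. Work in the tensor algebra A = T(V). Define D on pairs (a, w) with a ∈ V and w ∈ k·1 ⊕ V ⊂ A by D(a,1) = 0 and D(a,b) = 1⊗μ(a,b) − μ(b,a)⊗1 ∈ A⊗A for b ∈ V, and set Jac(a,b,c) := D(a,D'(b,c))⊗D''(b,c) + (123)·(D(b,D'(c,a))⊗D''(c,a)) + (132)·(D(c,D'(a,b))⊗D''(a,b)) for a,b,c ∈ V (each first Sweedler component D'(·,·) lies in k·1 ⊕ V, so this is well defined). Then, writing Assoc(a,b,c) := μ(μ(a,b),c) − μ(a,μ(b,c)), one has Jac(a,b,c) = 1⊗1⊗Assoc(b,a,c) + 1⊗Assoc(a,c,b)⊗1 + Assoc(c,b,a)⊗1⊗1 in A^⊗3 for all a,b,c ∈ V. -/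

import Mathlib

/-! Since `D(a, 1) = 0`, in `D(a, D'(b,c)) ⊗ D''(b,c)` only the summand `-μ(c,b) ⊗ 1` of
`D(b,c)` contributes, leaving `-1 ⊗ μ(a,μ(c,b)) ⊗ 1 + μ(μ(c,b),a) ⊗ 1 ⊗ 1`. After the cyclic
permutations each of the three terms yields two such tensors, and the pairs carrying their
non-unit factor in the same slot combine into the three associators. -/

open TensorProduct

noncomputable section

namespace DoubleBrackets

variable (k : Type*) [Field k] (A : Type*) [Ring A] [Algebra k A]

/-- `(123)·(x⊗y⊗z) = z⊗x⊗y`. -/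
def p123 : (A ⊗[k] (A ⊗[k] A)) →ₗ[k] (A ⊗[k] (A ⊗[k] A)) :=
  (TensorProduct.comm k (A ⊗[k] A) A).toLinearMap ∘ₗ (TensorProduct.assoc k A A A).symm.toLinearMap

/-- `(132)·(x⊗y⊗z) = y⊗z⊗x`. -/
def p132 : (A ⊗[k] (A ⊗[k] A)) →ₗ[k] (A ⊗[k] (A ⊗[k] A)) :=
  (TensorProduct.assoc k A A A).toLinearMap ∘ₗ (TensorProduct.comm k A (A ⊗[k] A)).toLinearMap

/-- For a linear map `F : A → A ⊗ A`, the map `x ⊗ y ↦ F(x) ⊗ y : A ⊗ A → A ⊗ A ⊗ A`,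
used to form `D(a, ξ') ⊗ ξ''` (application of `D(a,-)` to the first Sweedler component). -/
def applyLeft' (F : A →ₗ[k] (A ⊗[k] A)) :
    (A ⊗[k] A) →ₗ[k] (A ⊗[k] (A ⊗[k] A)) :=
  (TensorProduct.assoc k A A A).toLinearMap ∘ₗ TensorProduct.map F LinearMap.id

end DoubleBrackets

namespace DoubleBrackets

variable {k : Type*} [Field k] {A : Type*} [Ring A] [Algebra k A]

@[simp]
theorem p123_tmul_tmul (x y z : A) :
    p123 k A (x ⊗ₜ[k] (y ⊗ₜ[k] z)) = z ⊗ₜ[k] (x ⊗ₜ[k] y) :=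
  rfl

@[simp]
theorem p132_tmul_tmul (x y z : A) :
    p132 k A (x ⊗ₜ[k] (y ⊗ₜ[k] z)) = y ⊗ₜ[k] (z ⊗ₜ[k] x) :=
  rfl

@[simp]
theorem applyLeft'_tmul (F : A →ₗ[k] A ⊗[k] A) (x y : A) :
    applyLeft' k A F (x ⊗ₜ[k] y) = TensorProduct.assoc k A A A (F x ⊗ₜ[k] y) :=
  rfl

theorem applyLeft'_one_tmul_sub_tmul_one (F : A →ₗ[k] A ⊗[k] A) (hF : F 1 = 0) (x y : A) :
    applyLeft' k A F (1 ⊗ₜ[k] x - y ⊗ₜ[k] 1) = -TensorProduct.assoc k A A A (F y ⊗ₜ[k] 1) := by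
  rw [map_sub, applyLeft'_tmul, applyLeft'_tmul, hF, zero_tmul, map_zero, zero_sub]

end DoubleBrackets

open DoubleBrackets TensorAlgebra

theorem jacobiator_of_linear_double_bracket_general
    (k : Type*) [Field k]
    (V : Type*) [AddCommGroup V] [Module k V]
    (μ : V →ₗ[k] (V →ₗ[k] V))
    (Dext : V → (TensorAlgebra k V →ₗ[k] (TensorAlgebra k V ⊗[k] TensorAlgebra k V)))
    (hD1 : ∀ a : V, Dext a (1 : TensorAlgebra k V) = 0)
    (hDι : ∀ a b : V, Dext a (ι k b) =
      (1 : TensorAlgebra k V) ⊗ₜ[k] ι k (μ a b)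
        - ι k (μ b a) ⊗ₜ[k] (1 : TensorAlgebra k V)) :
    ∀ a b c : V,
      applyLeft' k (TensorAlgebra k V) (Dext a)
          ((1 : TensorAlgebra k V) ⊗ₜ[k] ι k (μ b c)
            - ι k (μ c b) ⊗ₜ[k] (1 : TensorAlgebra k V))
        + p123 k (TensorAlgebra k V)
            (applyLeft' k (TensorAlgebra k V) (Dext b)
              ((1 : TensorAlgebra k V) ⊗ₜ[k] ι k (μ c a)
                - ι k (μ a c) ⊗ₜ[k] (1 : TensorAlgebra k V)))
        + p132 k (TensorAlgebra k V)
            (applyLeft' k (TensorAlgebra k V) (Dext c)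
              ((1 : TensorAlgebra k V) ⊗ₜ[k] ι k (μ a b)
                - ι k (μ b a) ⊗ₜ[k] (1 : TensorAlgebra k V)))
      = (1 : TensorAlgebra k V) ⊗ₜ[k] ((1 : TensorAlgebra k V) ⊗ₜ[k]
            ι k (μ (μ b a) c - μ b (μ a c)))
        + (1 : TensorAlgebra k V) ⊗ₜ[k] (ι k (μ (μ a c) b - μ a (μ c b))
            ⊗ₜ[k] (1 : TensorAlgebra k V))
        + ι k (μ (μ c b) a - μ c (μ b a)) ⊗ₜ[k]
            ((1 : TensorAlgebra k V) ⊗ₜ[k] (1 : TensorAlgebra k V)) := by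
  intro a b c
  simp only [applyLeft'_one_tmul_sub_tmul_one _ (hD1 _), hDι, map_neg, map_sub,
    TensorProduct.sub_tmul, TensorProduct.tmul_sub, TensorProduct.assoc_tmul,
    p123_tmul_tmul, p132_tmul_tmul]
  abel

/-- Let `μ : V × V → V` be bilinear and define, in `A = T(V)`,
`D(a,1) = 0` and `D(a,b) = 1 ⊗ μ(a,b) - μ(b,a) ⊗ 1` for `a, b ∈ V` (encoded by a family of
linear maps `Dext a : A → A ⊗ A` prescribed on `k·1 ⊕ V`; the Jacobiator only uses these
values). Then the double Jacobiator equals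
`1⊗1⊗Assoc(b,a,c) + 1⊗Assoc(a,c,b)⊗1 + Assoc(c,b,a)⊗1⊗1`, where
`Assoc(a,b,c) = μ(μ(a,b),c) - μ(a,μ(b,c))`. -/
theorem jacobiator_of_linear_double_bracket
    (k : Type*) [Field k] [CharZero k]
    (V : Type*) [AddCommGroup V] [Module k V]
    (μ : V →ₗ[k] (V →ₗ[k] V))
    (Dext : V → (TensorAlgebra k V →ₗ[k] (TensorAlgebra k V ⊗[k] TensorAlgebra k V)))
    (hD1 : ∀ a : V, Dext a (1 : TensorAlgebra k V) = 0)
    (hDι : ∀ a b : V, Dext a (ι k b) =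
      (1 : TensorAlgebra k V) ⊗ₜ[k] ι k (μ a b)
        - ι k (μ b a) ⊗ₜ[k] (1 : TensorAlgebra k V)) :
    ∀ a b c : V,
      applyLeft' k (TensorAlgebra k V) (Dext a)
          ((1 : TensorAlgebra k V) ⊗ₜ[k] ι k (μ b c)
            - ι k (μ c b) ⊗ₜ[k] (1 : TensorAlgebra k V))
        + p123 k (TensorAlgebra k V)
            (applyLeft' k (TensorAlgebra k V) (Dext b)
              ((1 : TensorAlgebra k V) ⊗ₜ[k] ι k (μ c a)
                - ι k (μ a c) ⊗ₜ[k] (1 : TensorAlgebra k V)))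
        + p132 k (TensorAlgebra k V)
            (applyLeft' k (TensorAlgebra k V) (Dext c)
              ((1 : TensorAlgebra k V) ⊗ₜ[k] ι k (μ a b)
                - ι k (μ b a) ⊗ₜ[k] (1 : TensorAlgebra k V)))
      = (1 : TensorAlgebra k V) ⊗ₜ[k] ((1 : TensorAlgebra k V) ⊗ₜ[k]
            ι k (μ (μ b a) c - μ b (μ a c)))
        + (1 : TensorAlgebra k V) ⊗ₜ[k] (ι k (μ (μ a c) b - μ a (μ c b))
            ⊗ₜ[k] (1 : TensorAlgebra k V))
        + ι k (μ (μ c b) a - μ c (μ b a)) ⊗ₜ[k]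
            ((1 : TensorAlgebra k V) ⊗ₜ[k] (1 : TensorAlgebra k V)) :=
  jacobiator_of_linear_double_bracket_general k V μ Dext hD1 hDι
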